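/- arXiv:1405.2881 — 2 statements merged into one kernel-verified Lean document; each statement's English description precedes it below -/
import Mathlib

section
/- Let d ≥ 1, t ≥ 1 and let S be a finite set of a ≥ 1 points in ℝ^d. Consider partitions of S produced by recursive binary tree splitting: start from the single cell S, and repeatedly replace one current cell C by the two nonempty cells {x ∈ C : x^{(j)} < z} and {x ∈ C : x^{(j)} ≥ z} for some coordinate j ∈ {1, …, d} and threshold z ∈ ℝ (each split must separate the points of C into two nonempty groups), until at most t cells are obtained. Then the number of distinct partitions of S obtainable in this way is at most (d·a)^t. -/
/-- Partitions of a finite set `S` of points of `ℝ^d` obtainable by recursive binary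
axis-aligned splitting: start from the single cell `S`, and repeatedly replace a current
cell `C` by the two nonempty cells `{x ∈ C : x⁽ʲ⁾ < z}` and `{x ∈ C : x⁽ʲ⁾ ≥ z}`. -/
inductive TreePartition {d : ℕ} (S : Finset (Fin d → ℝ)) :
    Finset (Finset (Fin d → ℝ)) → Prop
  | root : TreePartition S {S}
  | split (P : Finset (Finset (Fin d → ℝ))) (C : Finset (Fin d → ℝ)) (j : Fin d) (z : ℝ)
      (hP : TreePartition S P) (hC : C ∈ P)
      (hL : (C.filter fun x => x j < z).Nonempty)
      (hR : (C.filter fun x => ¬ x j < z).Nonempty) :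
      TreePartition S
        (insert (C.filter fun x => x j < z)
          (insert (C.filter fun x => ¬ x j < z) (P.erase C)))

/-!
Every split of a cell `C` at coordinate `j` only depends on which points of `C` fall below
the threshold, so it is also the split at threshold `x j`, where `x` is the lowest point of
`C` above the original threshold. A split is therefore encoded by a pair `(j, x)` with `x`
a data point, and a partition with `c` cells by a word of length `c - 1` over an alphabet
of `d·a` letters. Splitting at the lowest point of `S` in some coordinate changes nothing,
so words of length `t` cover all partitions with at most `t` cells.
-/

section Reach

variable {α ι : Type*} [DecidableEq α] (f : α → ι → α) (I : Finset ι) (a₀ : α)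

def reachIn : ℕ → Finset α
  | 0 => {a₀}
  | k + 1 => (reachIn k ×ˢ I).image fun p => f p.1 p.2

theorem card_reachIn_le (k : ℕ) : (reachIn f I a₀ k).card ≤ I.card ^ k := by
  induction k with
  | zero => simp [reachIn]
  | succ k ih =>
    calc (reachIn f I a₀ (k + 1)).card ≤ (reachIn f I a₀ k ×ˢ I).card := Finset.card_image_le
      _ = (reachIn f I a₀ k).card * I.card := Finset.card_product _ _
      _ ≤ I.card ^ (k + 1) := by rw [pow_succ]; exact Nat.mul_le_mul_right _ ih

theorem mem_reachIn_succ {k : ℕ} {a : α} (ha : a ∈ reachIn f I a₀ k) {i : ι} (hi : i ∈ I) :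
    f a i ∈ reachIn f I a₀ (k + 1) := by
  rw [reachIn]
  exact Finset.mem_image.mpr ⟨(a, i), Finset.mem_product.mpr ⟨ha, hi⟩, rfl⟩

theorem reachIn_mono {i : ι} (hi : i ∈ I) (hfix : ∀ a, f a i = a) :
    Monotone (reachIn f I a₀) :=
  monotone_nat_of_le_succ fun _ a ha => hfix a ▸ mem_reachIn_succ f I a₀ ha hi

end Reach

theorem lt_iff_lt_of_le_of_imp {β : Type*} [LinearOrder β] {z m y : β} (hzm : z ≤ m)
    (hm : z ≤ y → m ≤ y) : y < m ↔ y < z :=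
  ⟨fun hy => lt_of_not_ge fun hzy => (hm hzy).not_gt hy, fun hy => hy.trans_le hzm⟩

section Splits

variable {d : ℕ}

noncomputable def splitCell (P : Finset (Finset (Fin d → ℝ))) (C : Finset (Fin d → ℝ))
    (j : Fin d) (z : ℝ) : Finset (Finset (Fin d → ℝ)) :=
  insert {x ∈ C | x j < z} (insert {x ∈ C | ¬ x j < z} (P.erase C))

theorem notMem_erase_of_subset_of_pairwiseDisjoint {β : Type*} [DecidableEq β]
    {P : Finset (Finset β)} (hP : (P : Set (Finset β)).PairwiseDisjoint id) {C E : Finset β}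
    (hC : C ∈ P) (hEC : E ⊆ C) (hE : E.Nonempty) : E ∉ P.erase C := fun hmem =>
  have hdisj : Disjoint E C := hP (Finset.mem_of_mem_erase hmem) hC (Finset.ne_of_mem_erase hmem)
  hE.ne_empty (Finset.disjoint_self_iff_empty _ |>.mp (hdisj.mono_right hEC))

theorem card_splitCell {P : Finset (Finset (Fin d → ℝ))}
    (hP : (P : Set (Finset (Fin d → ℝ))).PairwiseDisjoint id) {C : Finset (Fin d → ℝ)}
    (hC : C ∈ P) {j : Fin d} {z : ℝ} (hL : {x ∈ C | x j < z}.Nonempty)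
    (hR : {x ∈ C | ¬ x j < z}.Nonempty) : (splitCell P C j z).card = P.card + 1 := by
  have hLR : {x ∈ C | x j < z} ≠ {x ∈ C | ¬ x j < z} := fun h =>
    hL.ne_empty (Finset.disjoint_self_iff_empty _ |>.mp
      ((Finset.disjoint_filter_filter_not C C _).mono_right h.le))
  have hLerase := notMem_erase_of_subset_of_pairwiseDisjoint hP hC (Finset.filter_subset _ _) hL
  have hRerase := notMem_erase_of_subset_of_pairwiseDisjoint hP hC (Finset.filter_subset _ _) hR
  have hLnew : {x ∈ C | x j < z} ∉ insert {x ∈ C | ¬ x j < z} (P.erase C) := by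
    rw [Finset.mem_insert, not_or]
    exact ⟨hLR, hLerase⟩
  rw [splitCell, Finset.card_insert_of_notMem hLnew, Finset.card_insert_of_notMem hRerase,
    Finset.card_erase_add_one hC]

namespace TreePartition

variable {S : Finset (Fin d → ℝ)} {P : Finset (Finset (Fin d → ℝ))}

theorem subset (hP : TreePartition S P) {C : Finset (Fin d → ℝ)} (hC : C ∈ P) : C ⊆ S := by
  induction hP generalizing C with
  | root => exact (Finset.mem_singleton.mp hC).le
  | split P C' j z _ hC' _ _ ih =>
    rw [Finset.mem_insert, Finset.mem_insert] at hC
    rcases hC with rfl | rfl | hC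
    · exact (Finset.filter_subset _ _).trans (ih hC')
    · exact (Finset.filter_subset _ _).trans (ih hC')
    · exact ih (Finset.mem_of_mem_erase hC)

theorem pairwiseDisjoint (hP : TreePartition S P) :
    (P : Set (Finset (Fin d → ℝ))).PairwiseDisjoint id := by
  induction hP with
  | root => simp
  | split P C j z _ hC _ _ ih =>
    have hout : ∀ E ⊆ C, ∀ D ∈ (P.erase C : Set (Finset (Fin d → ℝ))), E ≠ D →
        Disjoint (id E) (id D) := fun E hE D hD _ =>
      (ih hC (Finset.mem_of_mem_erase hD) (Finset.ne_of_mem_erase hD).symm).mono_left hE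
    rw [Finset.coe_insert, Finset.coe_insert]
    refine ((ih.subset (Finset.coe_subset.mpr (Finset.erase_subset C P))).insert
      (hout _ (Finset.filter_subset _ _))).insert ?_
    rintro D (rfl | hD) hne
    · exact Finset.disjoint_filter_filter_not C C _
    · exact hout _ (Finset.filter_subset _ _) D hD hne

end TreePartition

open Classical in
noncomputable def splitAt (S : Finset (Fin d → ℝ)) (P : Finset (Finset (Fin d → ℝ)))
    (jx : Fin d × (Fin d → ℝ)) : Finset (Finset (Fin d → ℝ)) :=
  if h : ∃ C ∈ P, C ⊆ S ∧ jx.2 ∈ C ∧ {y ∈ C | y jx.1 < jx.2 jx.1}.Nonempty then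
    splitCell P h.choose jx.1 (jx.2 jx.1)
  else P

theorem splitAt_eq_self {S : Finset (Fin d → ℝ)} (P : Finset (Finset (Fin d → ℝ))) {j : Fin d}
    {x : Fin d → ℝ} (hmin : ∀ y ∈ S, x j ≤ y j) : splitAt S P (j, x) = P :=
  dif_neg fun ⟨_, _, hCS, _, y, hy⟩ =>
    (Finset.mem_filter.mp hy).2.not_ge (hmin y (hCS (Finset.mem_filter.mp hy).1))

theorem exists_splitAt_eq {S : Finset (Fin d → ℝ)} {P : Finset (Finset (Fin d → ℝ))}
    (hP : (P : Set (Finset (Fin d → ℝ))).PairwiseDisjoint id) {C : Finset (Fin d → ℝ)}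
    (hC : C ∈ P) (hCS : C ⊆ S) {j : Fin d} {z : ℝ} (hL : {x ∈ C | x j < z}.Nonempty)
    (hR : {x ∈ C | ¬ x j < z}.Nonempty) :
    ∃ x ∈ S, splitAt S P (j, x) = splitCell P C j z := by
  obtain ⟨x, hxR, hxmin⟩ := Finset.exists_min_image _ (fun y => y j) hR
  obtain ⟨hxC, hzx⟩ := Finset.mem_filter.mp hxR
  have hlt : ∀ y ∈ C, y j < x j ↔ y j < z := fun y hy =>
    lt_iff_lt_of_le_of_imp (not_lt.mp hzx) fun hzy =>
      hxmin y (Finset.mem_filter.mpr ⟨hy, not_lt.mpr hzy⟩)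
  have hsplit : splitCell P C j (x j) = splitCell P C j z := by
    rw [splitCell, splitCell, Finset.filter_congr hlt,
      Finset.filter_congr fun y hy => not_congr (hlt y hy)]
  have h : ∃ C ∈ P, C ⊆ S ∧ x ∈ C ∧ {y ∈ C | y j < x j}.Nonempty :=
    ⟨C, hC, hCS, hxC, by rwa [Finset.filter_congr hlt]⟩
  obtain ⟨hC', -, hxC', -⟩ := h.choose_spec
  have hcell : h.choose = C := hP.elim_finset hC' hC x hxC' hxC
  exact ⟨x, hCS hxC, by rw [splitAt, dif_pos h, hcell, hsplit]⟩

theorem TreePartition.mem_reachIn {S : Finset (Fin d → ℝ)} {P : Finset (Finset (Fin d → ℝ))}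
    (hP : TreePartition S P) :
    P ∈ reachIn (splitAt S) (Finset.univ ×ˢ S) {S} (P.card - 1) := by
  induction hP with
  | root => simp [reachIn]
  | split P C j z hP hC hL hR ih =>
    obtain ⟨x, hxS, hx⟩ := exists_splitAt_eq hP.pairwiseDisjoint hC (hP.subset hC) hL hR
    have hcard : (splitCell P C j z).card - 1 = P.card - 1 + 1 := by
      have := Finset.card_pos.mpr ⟨C, hC⟩
      rw [card_splitCell hP.pairwiseDisjoint hC hL hR]
      omega
    change splitCell P C j z ∈ reachIn _ _ _ ((splitCell P C j z).card - 1)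
    rw [hcard, ← hx]
    exact mem_reachIn_succ _ _ _ ih (Finset.mem_product.mpr ⟨Finset.mem_univ j, hxS⟩)

end Splits

theorem treePartition_count_le_general (d a t : ℕ) (hd : 1 ≤ d) (ha : 1 ≤ a)
    (S : Finset (Fin d → ℝ)) (hS : S.card = a) :
    {P : Finset (Finset (Fin d → ℝ)) | TreePartition S P ∧ P.card ≤ t}.encard ≤
      (((d * a) ^ t : ℕ) : ℕ∞) := by
  set I := (Finset.univ : Finset (Fin d)) ×ˢ S
  have hI : I.card = d * a := by simp [I, hS]
  obtain ⟨x₀, hx₀, hmin⟩ :=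
    Finset.exists_min_image S (fun y => y ⟨0, hd⟩) (Finset.card_pos.mp (hS ▸ ha))
  have hmono : Monotone (reachIn (splitAt S) I {S}) :=
    reachIn_mono _ _ _ (Finset.mem_product.mpr ⟨Finset.mem_univ _, hx₀⟩)
      fun P => splitAt_eq_self P hmin
  have hsub : {P | TreePartition S P ∧ P.card ≤ t} ⊆ ↑(reachIn (splitAt S) I {S} t) :=
    fun P ⟨hP, hPt⟩ => hmono (by omega : P.card - 1 ≤ t) hP.mem_reachIn
  calc _ ≤ (↑(reachIn (splitAt S) I {S} t) : Set _).encard := Set.encard_le_encard hsub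
    _ = (reachIn (splitAt S) I {S} t).card := Set.encard_coe_eq_coe_finsetCard _
    _ ≤ (((d * a) ^ t : ℕ) : ℕ∞) := by
      exact_mod_cast hI ▸ card_reachIn_le (splitAt S) I {S} t

/-- Partitioning-number bound: the number of distinct partitions of a set of `a` points
of `ℝ^d` produced by recursive binary tree splitting into at most `t` cells is at most
`(d·a)^t`. -/
theorem treePartition_count_le (d a t : ℕ) (hd : 1 ≤ d) (ha : 1 ≤ a) (ht : 1 ≤ t)
    (S : Finset (Fin d → ℝ)) (hS : S.card = a) :
    {P : Finset (Finset (Fin d → ℝ)) | TreePartition S P ∧ P.card ≤ t}.encard ≤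
      (((d * a) ^ t : ℕ) : ℕ∞) :=
  treePartition_count_le_general d a t hd ha S hS
end

section
/- Let σ > 0 and c ≥ 0, and for each n let ε₁, …, εₙ be independent, identically distributed centered Gaussian random variables with variance σ². Then lim_{n → ∞} E[ (c + max_{1 ≤ i ≤ n} |εᵢ|)² · 1_{ max_{1 ≤ i ≤ n} εᵢ ≥ σ√2 (log n)² } ] = 0. -/
/-!
By Fernique's theorem `exp (C x²)` is integrable under the Gaussian law for some `C > 0`. On the
event `max εᵢ ≥ t ≥ 0` the largest `|εᵢ|` is at least `t`, so the integrand is dominated by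
`K e^{-C t² / 2} ∑ᵢ exp (C εᵢ²)`, whose expectation is `K e^{-C t² / 2} n 𝔼[exp (C ε²)]`.
For `t = σ√2 (log n)²` this is a constant times `n e^{-Cσ² (log n)⁴}`, which tends to zero.
-/

open MeasureTheory ProbabilityTheory Filter Topology Real

lemma sq_add_abs_le_mul_exp_mul_sq (c y : ℝ) {a : ℝ} (ha : 0 < a) :
    (c + |y|) ^ 2 ≤ (2 * c ^ 2 + 2 / a) * exp (a * y ^ 2) := by
  have hexp : 1 ≤ exp (a * y ^ 2) := one_le_exp (by positivity)
  have hy : a * y ^ 2 ≤ exp (a * y ^ 2) := (le_add_of_nonneg_right zero_le_one).trans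
    (add_one_le_exp _)
  have hy' : y ^ 2 ≤ exp (a * y ^ 2) / a := by rw [le_div_iff₀ ha]; linarith
  calc (c + |y|) ^ 2 ≤ 2 * c ^ 2 + 2 * y ^ 2 := by nlinarith [sq_nonneg (c - |y|), sq_abs y]
    _ ≤ 2 * c ^ 2 * exp (a * y ^ 2) + 2 * (exp (a * y ^ 2) / a) := by
        nlinarith [mul_le_mul_of_nonneg_left hexp (sq_nonneg c)]
    _ = (2 * c ^ 2 + 2 / a) * exp (a * y ^ 2) := by ring

lemma sq_add_abs_le_of_le_abs (c : ℝ) {C t y : ℝ} (hC : 0 < C) (ht : 0 ≤ t) (hty : t ≤ |y|) :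
    (c + |y|) ^ 2 ≤ (2 * c ^ 2 + 4 / C) * exp (-(C / 2 * t ^ 2)) * exp (C * y ^ 2) := by
  have hsq : t ^ 2 ≤ y ^ 2 := by rw [← sq_abs y]; gcongr
  calc (c + |y|) ^ 2 ≤ (2 * c ^ 2 + 2 / (C / 2)) * exp (C / 2 * y ^ 2) :=
        sq_add_abs_le_mul_exp_mul_sq c y (by positivity)
    _ ≤ (2 * c ^ 2 + 4 / C) * exp (-(C / 2 * t ^ 2) + C * y ^ 2) := by
        rw [show 2 / (C / 2) = 4 / C by ring]
        gcongr
        nlinarith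
    _ = (2 * c ^ 2 + 4 / C) * exp (-(C / 2 * t ^ 2)) * exp (C * y ^ 2) := by
        rw [exp_add, mul_assoc]

lemma ite_sq_add_ciSup_abs_le_mul_sum_exp {ι : Type*} [Fintype ι] [Nonempty ι] (c : ℝ) {C t : ℝ}
    (hC : 0 < C) (ht : 0 ≤ t) (f : ι → ℝ) :
    (if t ≤ ⨆ i, f i then (c + ⨆ i, |f i|) ^ 2 else 0) ≤
      (2 * c ^ 2 + 4 / C) * exp (-(C / 2 * t ^ 2)) * ∑ i, exp (C * f i ^ 2) := by
  split_ifs with h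
  · obtain ⟨i, hi⟩ := exists_eq_ciSup_of_finite (f := fun i => |f i|)
    have hti : t ≤ |f i| :=
      h.trans <| hi ▸ ciSup_mono (Finite.bddAbove_range _) fun j => le_abs_self _
    rw [← hi]
    refine (sq_add_abs_le_of_le_abs c hC ht hti).trans ?_
    gcongr
    exact Finset.single_le_sum (f := fun j => exp (C * f j ^ 2)) (fun j _ => (exp_pos _).le)
      (Finset.mem_univ i)
  · positivity

lemma integral_ite_sq_add_ciSup_abs_le {Ω ι : Type*} [MeasurableSpace Ω]
    {P : Measure Ω} [Fintype ι] [Nonempty ι] {ν : Measure ℝ} [IsProbabilityMeasure ν] (c : ℝ)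
    {C t : ℝ} (hC : 0 < C) (ht : 0 ≤ t) (hν : Integrable (fun x => exp (C * x ^ 2)) ν)
    (X : ι → Ω → ℝ) (hX : ∀ i, P.map (X i) = ν) :
    ∫ ω, (if t ≤ ⨆ i, X i ω then (c + ⨆ i, |X i ω|) ^ 2 else 0) ∂P ≤
      (2 * c ^ 2 + 4 / C) * exp (-(C / 2 * t ^ 2)) *
        (Fintype.card ι * ∫ x, exp (C * x ^ 2) ∂ν) := by
  have hmeas : ∀ i, AEMeasurable (X i) P := fun i =>
    AEMeasurable.of_map_ne_zero (hX i ▸ IsProbabilityMeasure.ne_zero ν)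
  have hsm : AEStronglyMeasurable (fun x : ℝ => exp (C * x ^ 2)) ν := by fun_prop
  have hint : ∀ i, Integrable (fun ω => exp (C * X i ω ^ 2)) P := fun i =>
    Integrable.comp_aemeasurable (g := fun x => exp (C * x ^ 2)) (hX i ▸ hν) (hmeas i)
  have hmoment : ∀ i, ∫ ω, exp (C * X i ω ^ 2) ∂P = ∫ x, exp (C * x ^ 2) ∂ν := fun i => by
    rw [← hX i, integral_map (hmeas i) (hX i ▸ hsm)]
  calc _ ≤ ∫ ω, (2 * c ^ 2 + 4 / C) * exp (-(C / 2 * t ^ 2)) * ∑ i, exp (C * X i ω ^ 2) ∂P :=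
        integral_mono_of_nonneg (ae_of_all _ fun ω => by split_ifs <;> positivity)
          ((integrable_finsetSum _ fun i _ => hint i).const_mul _)
          (ae_of_all _ fun ω => ite_sq_add_ciSup_abs_le_mul_sum_exp c hC ht _)
    _ = _ := by
        rw [integral_const_mul, integral_finsetSum _ fun i _ => hint i]
        simp [hmoment]

lemma exists_integrable_exp_mul_sq_gaussianReal (m : ℝ) (v : NNReal) :
    ∃ C, 0 < C ∧ Integrable (fun x => exp (C * x ^ 2)) (gaussianReal m v) := by
  simpa only [norm_eq_abs, sq_abs] using IsGaussian.exists_integrable_exp_sq (gaussianReal m v)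

lemma tendsto_natCast_mul_exp_neg_mul_log_pow_four {a : ℝ} (ha : 0 < a) :
    Tendsto (fun n : ℕ => n * exp (-(a * log n ^ 4))) atTop (𝓝 0) := by
  have hpoly : Tendsto (fun x : ℝ => x * (1 - a * x ^ 3)) atTop atBot :=
    tendsto_id.atTop_mul_atBot₀ <| tendsto_atBot_add_const_left _ 1 <|
      (tendsto_pow_atTop (n := 3) (by norm_num)).const_mul_atTop_of_neg (neg_neg_of_pos ha)
        |>.congr fun x => by ring
  refine (tendsto_exp_atBot.comp (hpoly.comp (tendsto_log_atTop.comp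
    tendsto_natCast_atTop_atTop))).congr' ?_
  filter_upwards [eventually_gt_atTop 0] with n hn
  simp only [Function.comp_apply]
  rw [mul_sub, mul_one, sub_eq_add_neg, exp_add, exp_log (by exact_mod_cast hn)]
  ring_nf

theorem expected_overshoot_tendsto_zero_general {Ω : Type*} [MeasureSpace Ω]
    [IsProbabilityMeasure (ℙ : Measure Ω)]
    (σ : ℝ) (hσ : 0 < σ) (c : ℝ)
    (ε : (n : ℕ) → Fin n → Ω → ℝ)
    (hdist : ∀ n (i : Fin n), Measure.map (ε n i) ℙ = gaussianReal 0 ⟨σ ^ 2, sq_nonneg σ⟩) :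
    Filter.Tendsto
      (fun n : ℕ => ∫ ω,
        (if σ * Real.sqrt 2 * (Real.log n) ^ 2 ≤ ⨆ i, ε n i ω
          then (c + ⨆ i, |ε n i ω|) ^ 2 else 0) ∂ℙ)
      Filter.atTop (nhds 0) := by
  -- Instance search does not see through `ℝ≥0` to match the anonymous constructor.
  have : IsProbabilityMeasure (gaussianReal 0 ⟨σ ^ 2, sq_nonneg σ⟩) :=
    instIsProbabilityMeasureGaussianReal _ _
  obtain ⟨C, hC, hint⟩ := exists_integrable_exp_mul_sq_gaussianReal 0 ⟨σ ^ 2, sq_nonneg σ⟩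
  set M := ∫ x, exp (C * x ^ 2) ∂gaussianReal 0 ⟨σ ^ 2, sq_nonneg σ⟩
  have hexponent (n : ℕ) : C / 2 * (σ * √2 * log n ^ 2) ^ 2 = C * σ ^ 2 * log n ^ 4 := by
    rw [mul_pow, mul_pow, sq_sqrt zero_le_two]; ring
  have hbound := (tendsto_natCast_mul_exp_neg_mul_log_pow_four
    (by positivity : 0 < C * σ ^ 2)).const_mul ((2 * c ^ 2 + 4 / C) * M)
  rw [mul_zero] at hbound
  refine tendsto_of_tendsto_of_tendsto_of_le_of_le' tendsto_const_nhds hbound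
    (Eventually.of_forall fun n => integral_nonneg fun ω => by split_ifs <;> positivity) ?_
  filter_upwards [eventually_gt_atTop 0] with n hn
  have : Nonempty (Fin n) := Fin.pos_iff_nonempty.mp hn
  refine (integral_ite_sq_add_ciSup_abs_le c hC (by positivity) hint _ (hdist n)).trans_eq ?_
  rw [hexponent, Fintype.card_fin]
  ring

/-- Let `σ > 0`, `c ≥ 0`, and for each `n` let `ε n 1, …, ε n n` be i.i.d. centered
Gaussian random variables with variance `σ²`.  Then
`E[(c + max_i |ε n i|)² · 1_{max_i ε n i ≥ σ√2 (log n)²}] → 0` as `n → ∞`. -/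
theorem expected_overshoot_tendsto_zero {Ω : Type*} [MeasureSpace Ω]
    [IsProbabilityMeasure (ℙ : Measure Ω)]
    (σ : ℝ) (hσ : 0 < σ) (c : ℝ) (hc : 0 ≤ c)
    (ε : (n : ℕ) → Fin n → Ω → ℝ)
    (hindep : ∀ n, iIndepFun (ε n) ℙ)
    (hdist : ∀ n (i : Fin n), Measure.map (ε n i) ℙ = gaussianReal 0 ⟨σ ^ 2, sq_nonneg σ⟩) :
    Filter.Tendsto
      (fun n : ℕ => ∫ ω,
        (if σ * Real.sqrt 2 * (Real.log n) ^ 2 ≤ ⨆ i, ε n i ω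
          then (c + ⨆ i, |ε n i ω|) ^ 2 else 0) ∂ℙ)
      Filter.atTop (nhds 0) :=
  expected_overshoot_tendsto_zero_general σ hσ c ε hdist
end
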